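/- Let A be an arbitrary d×d complex matrix, G a Hermitian unitary d×d matrix, V(θ) = exp(−i(θ/2)G), O a Hermitian matrix that anti-commutes with G, and Õ₁, Õ₂ Hermitian matrices that commute with G. Then, with E_θ the expectation over θ uniform on [−aπ, aπ] for a ∈ (0,1): (1) E_θ [Tr[O V A V†] · Tr[Õ₁ V A V†]] = γ · Tr[OA] · Tr[Õ₁A]; (2) E_θ [(d/dθ)Tr[O V A V†] · (d/dθ)Tr[Õ₁ V A V†]] = 0; (3) E_θ [Tr[Õ₁ V A V†] · Tr[Õ₂ V A V†]] = Tr[Õ₁A] · Tr[Õ₂A]; (4) E_θ [(d/dθ)Tr[Õ₁ V A V†] · (d/dθ)Tr[Õ₂ V A V†]] = 0, where γ = sin(aπ)/(aπ) and V = V(θ). -/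

import Mathlib

open MeasureTheory Matrix BigOperators

noncomputable section

set_option maxHeartbeats 1000000 in
lemma exp_smul_sq_one {d : ℕ} (G : Matrix (Fin d) (Fin d) ℂ) (hGU : G * G = 1) (z : ℂ) :
    NormedSpace.exp ((z * Complex.I) • G)
      = (Complex.cos z) • (1 : Matrix (Fin d) (Fin d) ℂ) + (Complex.sin z * Complex.I) • G := by
  have hG2 : G ^ 2 = 1 := by rw [pow_two, hGU]
  have hpow : ∀ n : ℕ, ((Nat.factorial n : ℂ))⁻¹ • ((z * Complex.I) • G) ^ n
      = ((z * Complex.I) ^ n / (Nat.factorial n : ℂ)) • G ^ n := by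
    intro n
    rw [smul_pow, smul_smul, div_eq_mul_inv, mul_comm]
  have he : HasSum (fun k : ℕ => ((Nat.factorial (2 * k) : ℂ))⁻¹ • ((z * Complex.I) • G) ^ (2 * k))
      ((Complex.cos z) • (1 : Matrix (Fin d) (Fin d) ℂ)) := by
    have h := (Complex.hasSum_cos' z).smul_const (1 : Matrix (Fin d) (Fin d) ℂ)
    convert h using 1
    funext k
    rw [hpow, pow_mul G, hG2, one_pow]
  have ho : HasSum (fun k : ℕ =>
      ((Nat.factorial (2 * k + 1) : ℂ))⁻¹ • ((z * Complex.I) • G) ^ (2 * k + 1))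
      ((Complex.sin z * Complex.I) • G) := by
    have h := ((Complex.hasSum_sin' z).mul_right Complex.I).smul_const G
    simp only [div_mul_cancel₀ _ Complex.I_ne_zero] at h
    convert h using 1
    funext k
    rw [hpow, pow_succ G, pow_mul G, hG2, one_pow, one_mul]
  have main := HasSum.even_add_odd
    (f := fun n : ℕ => ((Nat.factorial n : ℂ))⁻¹ • ((z * Complex.I) • G) ^ n) he ho
  letI : SeminormedRing (Matrix (Fin d) (Fin d) ℂ) := Matrix.linftyOpSemiNormedRing
  letI : NormedRing (Matrix (Fin d) (Fin d) ℂ) := Matrix.linftyOpNormedRing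
  letI : NormedAlgebra ℂ (Matrix (Fin d) (Fin d) ℂ) := Matrix.linftyOpNormedAlgebra
  exact (NormedSpace.exp_series_hasSum_exp' (𝕂 := ℂ) ((z * Complex.I) • G)).unique main

/-- `V(θ) = exp(-i (θ/2) G)` (matrix exponential). -/
def Vrot {d : ℕ} (G : Matrix (Fin d) (Fin d) ℂ) (θ : ℝ) : Matrix (Fin d) (Fin d) ℂ :=
  NormedSpace.exp ((-(θ : ℂ) * Complex.I / 2) • G)

/-- Expectation `E_θ f(θ) = (1/(2aπ)) ∫_{-aπ}^{aπ} f(θ) dθ` of a complex-valued function of a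
single parameter `θ` uniform on `[-aπ, aπ]`. -/
def expect1 (a : ℝ) (f : ℝ → ℂ) : ℂ :=
  (1 / (2 * a * Real.pi) : ℂ) * ∫ θ in (-(a * Real.pi))..(a * Real.pi), f θ

section aux

variable {d : ℕ} (A G O : Matrix (Fin d) (Fin d) ℂ)

lemma aux_Vform (θ : ℝ) : Vrot G θ = NormedSpace.exp (((-(θ:ℂ)/2) * Complex.I) • G) := by
  rw [Vrot, show (-(θ:ℂ) * Complex.I / 2) = ((-(θ:ℂ)/2) * Complex.I) by ring]

lemma aux_Vd (hGH : G.IsHermitian) (θ : ℝ) :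
    (Vrot G θ)ᴴ = NormedSpace.exp ((((θ:ℂ)/2) * Complex.I) • G) := by
  rw [Vrot, ← Matrix.exp_conjTranspose, Matrix.conjTranspose_smul, hGH.eq]
  congr 1
  rw [show (((θ:ℂ))/2 * Complex.I) = star (-(θ:ℂ) * Complex.I / 2) by
    simp [Complex.ext_iff]]

lemma aux_Vd2 (hGH : G.IsHermitian) (θ : ℝ) :
    (Vrot G θ)ᴴ * (Vrot G θ)ᴴ = NormedSpace.exp (((θ:ℂ) * Complex.I) • G) := by
  rw [aux_Vd G hGH,
    ← Matrix.exp_add_of_commute _ _ (((Commute.refl G).smul_left _).smul_right _), ← add_smul]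
  congr 2
  ring

lemma aux_unit (hGH : G.IsHermitian) (θ : ℝ) : (Vrot G θ)ᴴ * Vrot G θ = 1 := by
  rw [aux_Vd G hGH, aux_Vform, ← Matrix.exp_add_of_commute _ _
    (((Commute.refl G).smul_left _).smul_right _), ← add_smul,
    show ((θ:ℂ)/2 * Complex.I + (-(θ:ℂ)/2) * Complex.I) = 0 by ring, zero_smul,
    NormedSpace.exp_zero]

lemma aux_const (hGH : G.IsHermitian) (B : Matrix (Fin d) (Fin d) ℂ) (hB : B * G = G * B)
    (θ : ℝ) :
    Matrix.trace (B * Vrot G θ * A * (Vrot G θ)ᴴ) = Matrix.trace (B * A) := by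
  have hc : B * Vrot G θ = Vrot G θ * B := by
    rw [Vrot]
    exact ((Commute.smul_right hB _).exp_right)
  rw [hc, Matrix.trace_mul_comm, ← Matrix.mul_assoc, ← Matrix.mul_assoc, aux_unit G hGH θ,
    Matrix.one_mul]

lemma aux_semi (hGU : G * G = 1) (hGH : G.IsHermitian) (hanti : O * G = -(G * O)) (θ : ℝ) :
    O * Vrot G θ = (Vrot G θ)ᴴ * O := by
  rw [aux_Vd G hGH, aux_Vform, exp_smul_sq_one G hGU, exp_smul_sq_one G hGU,
    show (-(θ:ℂ)/2) = -((θ:ℂ)/2) by ring, Complex.cos_neg, Complex.sin_neg]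
  simp only [Matrix.mul_add, Matrix.add_mul, Matrix.mul_smul, Matrix.smul_mul, hanti,
    Matrix.mul_one, Matrix.one_mul, smul_neg, neg_smul, neg_mul, mul_neg, neg_neg]

lemma aux_Otrace (hGU : G * G = 1) (hGH : G.IsHermitian) (hanti : O * G = -(G * O)) (θ : ℝ) :
    Matrix.trace (O * Vrot G θ * A * (Vrot G θ)ᴴ)
      = (Real.cos θ : ℂ) * Matrix.trace (O * A)
        + (Real.sin θ : ℂ) * (Complex.I * Matrix.trace (G * (O * A))) := by
  rw [aux_semi G O hGU hGH hanti θ, Matrix.trace_mul_comm, ← Matrix.mul_assoc, ← Matrix.mul_assoc,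
    aux_Vd2 G hGH θ, exp_smul_sq_one G hGU]
  simp only [Matrix.add_mul, Matrix.smul_mul, Matrix.one_mul, Matrix.trace_add,
    Matrix.trace_smul, smul_eq_mul, Matrix.mul_assoc]
  rw [← Complex.ofReal_cos, ← Complex.ofReal_sin]
  ring

lemma aux_int (b : ℝ) (T1 T2 : ℂ) :
    (∫ θ in (-b)..b, (Real.cos θ • T1 + Real.sin θ • T2 : ℂ))
      = (2 * Real.sin b : ℝ) • T1 := by
  have i1 : IntervalIntegrable (fun θ : ℝ => Real.cos θ • T1) volume (-b) b :=
    (Real.continuous_cos.smul continuous_const).intervalIntegrable _ _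
  have i2 : IntervalIntegrable (fun θ : ℝ => Real.sin θ • T2) volume (-b) b :=
    (Real.continuous_sin.smul continuous_const).intervalIntegrable _ _
  rw [intervalIntegral.integral_add i1 i2, intervalIntegral.integral_smul_const,
      intervalIntegral.integral_smul_const, integral_cos, integral_sin, Real.sin_neg,
      Real.cos_neg]
  simp [sub_neg_eq_add, two_mul]

end aux

/-- mixed second-moment identities for a Hermitian `O` anti-commuting with a
Hermitian unitary `G` and Hermitian `Õ₁, Õ₂` commuting with `G`. -/
theorem statement12 {d : ℕ} (hd : 1 ≤ d) (A G O Ot₁ Ot₂ : Matrix (Fin d) (Fin d) ℂ)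
    (hGH : G.IsHermitian) (hGU : G * G = 1)
    (hOH : O.IsHermitian) (hanti : O * G = -(G * O))
    (hO₁H : Ot₁.IsHermitian) (hcomm₁ : Ot₁ * G = G * Ot₁)
    (hO₂H : Ot₂.IsHermitian) (hcomm₂ : Ot₂ * G = G * Ot₂)
    (a : ℝ) (ha : a ∈ Set.Ioo (0 : ℝ) 1) :
    expect1 a (fun θ => Matrix.trace (O * Vrot G θ * A * (Vrot G θ)ᴴ) *
        Matrix.trace (Ot₁ * Vrot G θ * A * (Vrot G θ)ᴴ)) =
      ((Real.sin (a * Real.pi) / (a * Real.pi) : ℝ) : ℂ) *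
        (Matrix.trace (O * A) * Matrix.trace (Ot₁ * A)) ∧
    expect1 a (fun θ =>
        deriv (fun t => Matrix.trace (O * Vrot G t * A * (Vrot G t)ᴴ)) θ *
          deriv (fun t => Matrix.trace (Ot₁ * Vrot G t * A * (Vrot G t)ᴴ)) θ) = 0 ∧
    expect1 a (fun θ => Matrix.trace (Ot₁ * Vrot G θ * A * (Vrot G θ)ᴴ) *
        Matrix.trace (Ot₂ * Vrot G θ * A * (Vrot G θ)ᴴ)) =
      Matrix.trace (Ot₁ * A) * Matrix.trace (Ot₂ * A) ∧
    expect1 a (fun θ =>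
        deriv (fun t => Matrix.trace (Ot₁ * Vrot G t * A * (Vrot G t)ᴴ)) θ *
          deriv (fun t => Matrix.trace (Ot₂ * Vrot G t * A * (Vrot G t)ᴴ)) θ) = 0 := by
  have haC : (a : ℂ) ≠ 0 := by exact_mod_cast ne_of_gt ha.1
  have hπC : ((Real.pi : ℝ) : ℂ) ≠ 0 := by exact_mod_cast Real.pi_ne_zero
  have hg1 : (fun t : ℝ => Matrix.trace (Ot₁ * Vrot G t * A * (Vrot G t)ᴴ))
      = fun _ : ℝ => Matrix.trace (Ot₁ * A) := funext (aux_const A G hGH Ot₁ hcomm₁)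
  have hg2 : (fun t : ℝ => Matrix.trace (Ot₂ * Vrot G t * A * (Vrot G t)ᴴ))
      = fun _ : ℝ => Matrix.trace (Ot₂ * A) := funext (aux_const A G hGH Ot₂ hcomm₂)
  refine ⟨?_, ?_, ?_, ?_⟩
  · have h1 : (fun θ : ℝ => Matrix.trace (O * Vrot G θ * A * (Vrot G θ)ᴴ) *
        Matrix.trace (Ot₁ * Vrot G θ * A * (Vrot G θ)ᴴ))
        = fun θ : ℝ => Real.cos θ • (Matrix.trace (O * A) * Matrix.trace (Ot₁ * A))
          + Real.sin θ • (Complex.I * Matrix.trace (G * (O * A)) * Matrix.trace (Ot₁ * A)) := by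
      funext θ
      rw [aux_Otrace A G O hGU hGH hanti θ, aux_const A G hGH Ot₁ hcomm₁ θ, Complex.real_smul,
        Complex.real_smul]
      ring
    rw [expect1, h1, aux_int, Complex.real_smul]
    push_cast
    field_simp
  · have h2 : (fun θ : ℝ =>
        deriv (fun t => Matrix.trace (O * Vrot G t * A * (Vrot G t)ᴴ)) θ *
          deriv (fun t => Matrix.trace (Ot₁ * Vrot G t * A * (Vrot G t)ᴴ)) θ)
        = fun _ : ℝ => (0 : ℂ) := by
      funext θ
      rw [hg1, deriv_const, mul_zero]
    rw [h2, expect1]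
    simp
  · have h3 : (fun θ : ℝ => Matrix.trace (Ot₁ * Vrot G θ * A * (Vrot G θ)ᴴ) *
        Matrix.trace (Ot₂ * Vrot G θ * A * (Vrot G θ)ᴴ))
        = fun _ : ℝ => Matrix.trace (Ot₁ * A) * Matrix.trace (Ot₂ * A) := by
      funext θ
      rw [aux_const A G hGH Ot₁ hcomm₁ θ, aux_const A G hGH Ot₂ hcomm₂ θ]
    rw [h3, expect1, intervalIntegral.integral_const, sub_neg_eq_add, Complex.real_smul]
    push_cast
    field_simp
    ring
  · have h4 : (fun θ : ℝ =>
        deriv (fun t => Matrix.trace (Ot₁ * Vrot G t * A * (Vrot G t)ᴴ)) θ *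
          deriv (fun t => Matrix.trace (Ot₂ * Vrot G t * A * (Vrot G t)ᴴ)) θ)
        = fun _ : ℝ => (0 : ℂ) := by
      funext θ
      rw [hg2, deriv_const, mul_zero]
    rw [h4, expect1]
    simp

end
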